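/- Let (𝒳, ℬ, P, f) be a measure-preserving system enjoying decay of correlations against L¹ with non-increasing rate γ → 0, A ∈ ℬ with 1_A ∈ 𝒞, ℓ, k, t, b ∈ ℕ with n = k⌊n/k⌋ + b, ⌊n/k⌋·P(A) < 1, t < ⌊n/k⌋, ℓ = ⌊n/k⌋ − t, L = 1 − ℓP(A). Then |P(𝒲_{0,n}(A)) − L^k| ≤ kΥ_A(L+Υ_A)^{k-1}(1 + L + Υ_A), where Υ_A = t[P(A)+‖1_A‖_𝒞 γ(t)] + Ξ_{A,ℓ}. -/

import Mathlib

/-!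
Cut `[0, n)` into `k` blocks of `ℓ + t` times followed by the `b < k` remaining times. Splitting
according to the last visit to `A` among the first `ℓ` times of a block and using the decay of
correlations (the first return time `R` controls the short returns), the probability of avoiding
`A` there, jointly with an event depending only on times after the block, is `1 - ℓ P(A)` times
the probability of that event, up to `Ξ_{A,ℓ}`. The `t` idle times at the end of a block make every
lag at least `t` and cost `t (P(A) + ‖1_A‖ γ(t))`. Iterating over the `k` blocks produces `L ^ k`
with error `k Υ (L + Υ) ^ (k - 1)`, and the remaining `b ≤ k` times cost at most
`k Υ (L + Υ) ^ k`.
-/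

open MeasureTheory

/-- The event of avoiding `A` during the time window `[s, s+ℓ)`. -/
def avoidWindow {X : Type*} (T : X → X) (s ℓ : ℕ) (A : Set X) : Set X :=
  ⋂ i ∈ Finset.Ico s (s + ℓ), T^[i] ⁻¹' Aᶜ

section avoidWindow

variable {X : Type*} {T : X → X} {A : Set X}

lemma mem_avoidWindow {s l : ℕ} {x : X} :
    x ∈ avoidWindow T s l A ↔ ∀ i, s ≤ i → i < s + l → T^[i] x ∉ A := by
  simp only [avoidWindow, Set.mem_iInter, Set.mem_preimage, Set.mem_compl_iff,
    Finset.mem_Ico, and_imp]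

@[simp]
lemma avoidWindow_zero_length (s : ℕ) : avoidWindow T s 0 A = Set.univ :=
  Set.eq_univ_of_forall fun _ => mem_avoidWindow.2 fun _ _ h => absurd h (by omega)

lemma avoidWindow_succ_length (s l : ℕ) :
    avoidWindow T s (l + 1) A = T^[s] ⁻¹' Aᶜ ∩ avoidWindow T (s + 1) l A := by
  ext x
  simp only [mem_avoidWindow, Set.mem_inter_iff, Set.mem_preimage, Set.mem_compl_iff]
  refine ⟨fun h => ⟨h s le_rfl (by omega), fun i h₁ h₂ => h i (by omega) (by omega)⟩, ?_⟩
  rintro ⟨hs, h⟩ i h₁ h₂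
  rcases h₁.eq_or_lt with rfl | h₁
  · exact hs
  · exact h i h₁ (by omega)

lemma avoidWindow_add_length (s l₁ l₂ : ℕ) :
    avoidWindow T s (l₁ + l₂) A = avoidWindow T s l₁ A ∩ avoidWindow T (s + l₁) l₂ A := by
  ext x
  simp only [mem_avoidWindow, Set.mem_inter_iff]
  refine ⟨fun h => ⟨fun i h₁ h₂ => h i h₁ (by omega), fun i h₁ h₂ => h i (by omega) (by omega)⟩,
    fun ⟨h, h'⟩ i h₁ h₂ => ?_⟩
  rcases lt_or_ge i (s + l₁) with hi | hi
  · exact h i h₁ hi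
  · exact h' i hi (by omega)

lemma preimage_iterate_avoidWindow (g s l : ℕ) :
    T^[g] ⁻¹' avoidWindow T s l A = avoidWindow T (s + g) l A := by
  ext x
  simp only [Set.mem_preimage, mem_avoidWindow, ← Function.iterate_add_apply]
  refine ⟨fun h i h₁ h₂ => ?_, fun h i h₁ h₂ => h (i + g) (by omega) (by omega)⟩
  simpa [show i - g + g = i by omega] using h (i - g) (by omega) (by omega)

lemma avoidWindow_zero_add_length (l₁ l₂ : ℕ) :
    avoidWindow T 0 (l₁ + l₂) A = avoidWindow T 0 l₁ A ∩ T^[l₁] ⁻¹' avoidWindow T 0 l₂ A := by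
  rw [avoidWindow_add_length, preimage_iterate_avoidWindow, zero_add]

lemma avoidWindow_subset_avoidWindow {s s' l l' : ℕ} (hs : s ≤ s') (hl : s' + l' ≤ s + l) :
    avoidWindow T s l A ⊆ avoidWindow T s' l' A :=
  fun _ hx => mem_avoidWindow.2 fun i h₁ h₂ => mem_avoidWindow.1 hx i (by omega) (by omega)

lemma avoidWindow_add_subset_inter_preimage (s ℓ t : ℕ) :
    avoidWindow T 0 (s + (ℓ + t)) A ⊆ avoidWindow T 0 ℓ A ∩ T^[ℓ + t] ⁻¹' avoidWindow T 0 s A := by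
  rw [add_comm s, avoidWindow_zero_add_length]
  exact Set.inter_subset_inter_left _ (avoidWindow_subset_avoidWindow le_rfl (by omega))

lemma measurableSet_avoidWindow [MeasurableSpace X] (hT : Measurable T) (hA : MeasurableSet A)
    (s l : ℕ) : MeasurableSet (avoidWindow T s l A) :=
  Finset.measurableSet_biInter _ fun i _ => (hT.iterate i) hA.compl

end avoidWindow

section entrance

variable {X : Type*} [MeasurableSpace X] {μ : Measure X} [IsFiniteMeasure μ] {T : X → X}
  {A : Set X}

-- The `i`-th term is the part of `Z` whose last visit to `A` during `[a, a + d)` is at `a + i`.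
lemma measureReal_eq_avoidWindow_inter_add_sum (hT : Measurable T) (hA : MeasurableSet A)
    (d a : ℕ) (Z : Set X) :
    μ.real Z = μ.real (avoidWindow T a d A ∩ Z) + ∑ i ∈ Finset.range d,
      μ.real (T^[a + i] ⁻¹' A ∩ avoidWindow T (a + i + 1) (d - i - 1) A ∩ Z) := by
  induction d generalizing a with
  | zero => simp
  | succ d ih =>
    have hsplit := measureReal_inter_add_sdiff (μ := μ) (s := avoidWindow T (a + 1) d A ∩ Z)
      ((hT.iterate a) hA)
    have hdiff :
        (avoidWindow T (a + 1) d A ∩ Z) \ T^[a] ⁻¹' A = avoidWindow T a (d + 1) A ∩ Z := by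
      rw [avoidWindow_succ_length, Set.preimage_compl]
      ext x
      simp only [Set.mem_sdiff, Set.mem_inter_iff, Set.mem_compl_iff]
      tauto
    have hshift : ∀ i ∈ Finset.range d,
        μ.real (T^[a + (i + 1)] ⁻¹' A ∩
            avoidWindow T (a + (i + 1) + 1) (d + 1 - (i + 1) - 1) A ∩ Z) =
          μ.real (T^[a + 1 + i] ⁻¹' A ∩ avoidWindow T (a + 1 + i + 1) (d - i - 1) A ∩ Z) :=
      fun i _ => by
        rw [show a + (i + 1) = a + 1 + i by omega, show d + 1 - (i + 1) - 1 = d - i - 1 by omega]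
    rw [Finset.sum_range_succ', Finset.sum_congr rfl hshift, ih (a + 1), ← hsplit, hdiff,
      Nat.sub_zero, Nat.add_sub_cancel, Set.inter_right_comm, add_zero,
      Set.inter_comm (T^[a] ⁻¹' A)]
    ring

lemma measureReal_sub_avoidWindow_inter_le_sum (hT : Measurable T) (hA : MeasurableSet A)
    (d a : ℕ) (Z : Set X) :
    μ.real Z - μ.real (avoidWindow T a d A ∩ Z) ≤
      ∑ i ∈ Finset.range d, μ.real (T^[a + i] ⁻¹' A ∩ Z) := by
  rw [measureReal_eq_avoidWindow_inter_add_sum hT hA d a Z, add_sub_cancel_left]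
  exact Finset.sum_le_sum fun i _ => measureReal_mono fun x hx => ⟨hx.1.1, hx.2⟩

end entrance

lemma sum_range_sum_Ico_sub_le {g : ℕ → ℝ} (hg : ∀ j, 0 ≤ g j) (R ℓ : ℕ) :
    ∑ i ∈ Finset.range ℓ, ∑ j ∈ Finset.Ico R (ℓ - i), g j ≤
      (ℓ - R : ℕ) * ∑ j ∈ Finset.Ico R ℓ, g j := by
  rw [← Finset.sum_range_add_sum_Ico _ (Nat.sub_le ℓ R)]
  have hempty : ∑ i ∈ Finset.Ico (ℓ - R) ℓ, ∑ j ∈ Finset.Ico R (ℓ - i), g j = 0 :=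
    Finset.sum_eq_zero fun i hi => by
      rw [Finset.Ico_eq_empty (by simp only [Finset.mem_Ico] at hi; omega), Finset.sum_empty]
  rw [hempty, add_zero]
  simpa using Finset.sum_le_sum fun i (_ : i ∈ Finset.range (ℓ - R)) =>
    Finset.sum_le_sum_of_subset_of_nonneg (Finset.Ico_subset_Ico_right (a := R) (Nat.sub_le ℓ i))
      fun j _ _ => hg j

/-- The quantity `Ξ_{A,ℓ}` of the paper, for `P(A) = p` and correlation decay rate `ε`. -/
def blockError (p : ℝ) (ε : ℕ → ℝ) (R ℓ t : ℕ) : ℝ :=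
  ℓ * ε t + (ℓ - R : ℕ) * (p + ε t) * ∑ q ∈ Finset.Ico R ℓ, ε q +
    ℓ * (ℓ - R : ℕ) * (p ^ 2 + p * ε t)

lemma add_mul_sum_le_blockError {p : ℝ} {ε : ℕ → ℝ} (hp : 0 ≤ p) (hε : ∀ q, 0 ≤ ε q)
    (R ℓ t : ℕ) :
    ℓ * ε t + (ℓ - R : ℕ) * ∑ j ∈ Finset.Ico R ℓ, (p + ε j) * (p + ε t) ≤
      blockError p ε R ℓ t := by
  have hsum : ∑ j ∈ Finset.Ico R ℓ, (p + ε j) * (p + ε t) =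
      ((ℓ - R : ℕ) * p + ∑ j ∈ Finset.Ico R ℓ, ε j) * (p + ε t) := by
    rw [← Finset.sum_mul, Finset.sum_add_distrib, Finset.sum_const, Nat.card_Ico, nsmul_eq_mul]
  have hℓR : ((ℓ - R : ℕ) : ℝ) ≤ ℓ := by exact_mod_cast Nat.sub_le ℓ R
  have hpt : 0 ≤ p * (p + ε t) := mul_nonneg hp (add_nonneg hp (hε t))
  rw [hsum, blockError]
  linarith [mul_le_mul_of_nonneg_right hℓR (mul_nonneg (Nat.cast_nonneg (ℓ - R)) hpt)]

lemma blockError_nonneg {p : ℝ} {ε : ℕ → ℝ} (hp : 0 ≤ p) (hε : ∀ q, 0 ≤ ε q) (R ℓ t : ℕ) :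
    0 ≤ blockError p ε R ℓ t :=
  (add_nonneg (mul_nonneg (Nat.cast_nonneg _) (hε t)) (mul_nonneg (Nat.cast_nonneg _)
    (Finset.sum_nonneg fun j _ => mul_nonneg (add_nonneg hp (hε j)) (add_nonneg hp (hε t))))).trans
    (add_mul_sum_le_blockError hp hε R ℓ t)

section recurrence

variable {u : ℕ → ℝ} {K L Ξ δ : ℝ} {ℓ t : ℕ}

lemma le_pow_of_le_mul (hK : 0 ≤ K) (hu0 : u 0 ≤ 1) (hℓ : u ℓ ≤ K)
    (hstep : ∀ s, u (s + (ℓ + t)) ≤ K * u s) (j : ℕ) : u (j * (ℓ + t) - t) ≤ K ^ j := by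
  have hblock : ∀ j, u (j * (ℓ + t) + ℓ) ≤ K ^ (j + 1) := by
    intro j
    induction j with
    | zero => simpa using hℓ
    | succ j ih =>
      calc u ((j + 1) * (ℓ + t) + ℓ) = u (j * (ℓ + t) + ℓ + (ℓ + t)) := by ring_nf
        _ ≤ K * K ^ (j + 1) := (hstep _).trans (mul_le_mul_of_nonneg_left ih hK)
        _ = K ^ (j + 1 + 1) := by ring
  cases j with
  | zero => simpa using hu0
  | succ j =>
    rw [show (j + 1) * (ℓ + t) - t = j * (ℓ + t) + ℓ by rw [add_mul]; omega]
    exact hblock j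

lemma abs_sub_pow_le_of_abs_sub_mul_le (hu : Antitone u) (hu0 : u 0 = 1) (hL : 0 ≤ L)
    (hΞ : 0 ≤ Ξ) (hδ : 0 ≤ δ)
    (hstep : ∀ s, |u (s + (ℓ + t)) - L * u s| ≤ Ξ * u s + δ * u (s - t))
    (hpow : ∀ j, u (j * (ℓ + t) - t) ≤ (L + (δ + Ξ)) ^ j) (j : ℕ) :
    |u (j * (ℓ + t)) - L ^ j| ≤ j * (δ + Ξ) * (L + (δ + Ξ)) ^ (j - 1) := by
  set M := L + (δ + Ξ)
  have hM : 0 ≤ M := by positivity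
  induction j with
  | zero => simp [hu0]
  | succ j ih =>
    have hone : |u ((j + 1) * (ℓ + t)) - L * u (j * (ℓ + t))| ≤ (δ + Ξ) * M ^ j := by
      have h := hstep (j * (ℓ + t))
      rw [← add_one_mul] at h
      have h₁ := hpow j
      have h₂ := (hu (Nat.sub_le (j * (ℓ + t)) t)).trans h₁
      linarith [mul_le_mul_of_nonneg_left h₁ hδ, mul_le_mul_of_nonneg_left h₂ hΞ]
    have hprop : L * (j * (δ + Ξ) * M ^ (j - 1)) ≤ j * (δ + Ξ) * M ^ j := by
      rcases j with _ | j
      · simp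
      · rw [Nat.add_sub_cancel, pow_succ]
        have hnonneg : 0 ≤ ((j + 1 : ℕ) : ℝ) * (δ + Ξ) * M ^ j := by positivity
        calc L * (((j + 1 : ℕ) : ℝ) * (δ + Ξ) * M ^ j)
            ≤ M * (((j + 1 : ℕ) : ℝ) * (δ + Ξ) * M ^ j) :=
              mul_le_mul_of_nonneg_right (by linarith) hnonneg
          _ = _ := by ring
    calc |u ((j + 1) * (ℓ + t)) - L ^ (j + 1)|
        = |(u ((j + 1) * (ℓ + t)) - L * u (j * (ℓ + t))) + L * (u (j * (ℓ + t)) - L ^ j)| := by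
          ring_nf
      _ ≤ (δ + Ξ) * M ^ j + L * (j * (δ + Ξ) * M ^ (j - 1)) := by
          refine (abs_add_le _ _).trans (add_le_add hone ?_)
          rw [abs_mul, abs_of_nonneg hL]
          exact mul_le_mul_of_nonneg_left ih hL
      _ ≤ ((j + 1 : ℕ) : ℝ) * (δ + Ξ) * M ^ (j + 1 - 1) := by
          rw [Nat.add_sub_cancel]
          push_cast
          linarith

end recurrence

lemma Antitone.const_mul_of_mul_nonneg {C : ℝ} {γ : ℕ → ℝ} (hγ : Antitone γ)
    (hγ₀ : ∀ q, 0 ≤ γ q) (hCγ : ∀ q, 0 ≤ C * γ q) : Antitone fun q => C * γ q := by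
  rcases le_or_gt 0 C with hC | hC
  · exact fun a b hab => mul_le_mul_of_nonneg_left (hγ hab) hC
  · have hzero : ∀ q, γ q = 0 := fun q =>
      le_antisymm (nonpos_of_mul_nonneg_right (hCγ q) hC) (hγ₀ q)
    intro a b _
    simp [hzero]

def HasCorrelationDecay {X : Type*} [MeasurableSpace X] (μ : Measure X) (f : X → X) (A : Set X)
    (ε : ℕ → ℝ) : Prop :=
  ∀ S, MeasurableSet S → ∀ g, |μ.real (A ∩ f^[g] ⁻¹' S) - μ.real A * μ.real S| ≤ ε g * μ.real S

lemma hasCorrelationDecay_of_integral {X : Type*} [MeasurableSpace X] {μ : Measure X}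
    [IsFiniteMeasure μ] {f : X → X} (hf : Measurable f) {A : Set X} (hA : MeasurableSet A)
    {C : ℝ} {γ : ℕ → ℝ}
    (hdecay : ∀ ψ : X → ℝ, Integrable ψ μ → ∀ n : ℕ,
      |(∫ x, A.indicator (fun _ => (1 : ℝ)) x * ψ (f^[n] x) ∂μ) -
          (∫ x, A.indicator (fun _ => (1 : ℝ)) x ∂μ) * ∫ x, ψ x ∂μ| ≤
        C * (∫ x, |ψ x| ∂μ) * γ n) :
    HasCorrelationDecay μ f A fun g => C * γ g := by
  intro S hS g
  have hprod :
      (fun x => A.indicator (fun _ => (1 : ℝ)) x * S.indicator (fun _ => 1) (f^[g] x)) =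
        (A ∩ f^[g] ⁻¹' S).indicator fun _ => 1 := by
    ext x
    by_cases hx : x ∈ A <;> by_cases hgx : f^[g] x ∈ S <;> simp [hx, hgx]
  have habs : (fun x => |S.indicator (fun _ => (1 : ℝ)) x|) = S.indicator fun _ => 1 :=
    funext fun x => abs_of_nonneg (Set.indicator_nonneg (fun _ _ => zero_le_one) x)
  have h := hdecay _ ((integrable_const (1 : ℝ)).indicator hS) g
  simp only [hprod, habs, integral_indicator_const _ (hA.inter ((hf.iterate g) hS)),
    integral_indicator_const _ hA, integral_indicator_const _ hS, smul_eq_mul, mul_one] at h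
  linarith

namespace HasCorrelationDecay

variable {X : Type*} [MeasurableSpace X] {μ : Measure X} {f : X → X} {A : Set X} {ε : ℕ → ℝ}

lemma nonneg [IsProbabilityMeasure μ] (h : HasCorrelationDecay μ f A ε) (g : ℕ) : 0 ≤ ε g := by
  simpa using h Set.univ MeasurableSet.univ g

lemma abs_measureReal_inter_preimage_sub_le (h : HasCorrelationDecay μ f A ε) (hε : Antitone ε)
    {S : Set X} (hS : MeasurableSet S) {t g : ℕ} (htg : t ≤ g) :
    |μ.real (A ∩ f^[g] ⁻¹' S) - μ.real A * μ.real S| ≤ ε t * μ.real S :=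
  (h S hS g).trans (mul_le_mul_of_nonneg_right (hε htg) measureReal_nonneg)

lemma measureReal_inter_preimage_le (h : HasCorrelationDecay μ f A ε) (hε : Antitone ε)
    {S : Set X} (hS : MeasurableSet S) {t g : ℕ} (htg : t ≤ g) :
    μ.real (A ∩ f^[g] ⁻¹' S) ≤ (μ.real A + ε t) * μ.real S := by
  have := (abs_le.1 (h.abs_measureReal_inter_preimage_sub_le hε hS htg)).2
  linarith

lemma measureReal_inter_preimage_avoidWindow_le [IsProbabilityMeasure μ]
    (h : HasCorrelationDecay μ f A ε) (hε : Antitone ε) (hf : Measurable f)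
    (hA : MeasurableSet A) (q s t : ℕ) :
    μ.real (A ∩ f^[q] ⁻¹' avoidWindow f 0 s A) ≤
      (μ.real A + ε t) * μ.real (avoidWindow f 0 (s - t) A) := by
  -- lengthen the lag to at least `t` by dropping the first `t - q` avoidance constraints
  set g := t - q
  have hsub :
      A ∩ f^[q] ⁻¹' avoidWindow f 0 s A ⊆ A ∩ f^[q + g] ⁻¹' avoidWindow f 0 (s - g) A := by
    simp only [preimage_iterate_avoidWindow, zero_add]
    rcases le_total g s with hgs | hsg
    · exact Set.inter_subset_inter_right _ (avoidWindow_subset_avoidWindow (by omega) (by omega))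
    · simp [Nat.sub_eq_zero_of_le hsg]
  calc μ.real (A ∩ f^[q] ⁻¹' avoidWindow f 0 s A)
      ≤ μ.real (A ∩ f^[q + g] ⁻¹' avoidWindow f 0 (s - g) A) := measureReal_mono hsub
    _ ≤ (μ.real A + ε t) * μ.real (avoidWindow f 0 (s - g) A) :=
      h.measureReal_inter_preimage_le hε (measurableSet_avoidWindow hf hA _ _) (by omega)
    _ ≤ (μ.real A + ε t) * μ.real (avoidWindow f 0 (s - t) A) :=
      mul_le_mul_of_nonneg_left
        (measureReal_mono (avoidWindow_subset_avoidWindow le_rfl (by omega)))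
        (add_nonneg measureReal_nonneg (h.nonneg t))

lemma measureReal_sub_avoidWindow_inter_le [IsProbabilityMeasure μ]
    (h : HasCorrelationDecay μ f A ε) (hε : Antitone ε) (hf : MeasurePreserving f μ μ)
    (hA : MeasurableSet A) {Z : Set X} {a d s : ℕ}
    (hZ : Z ⊆ f^[a + d] ⁻¹' avoidWindow f 0 s A) (t : ℕ) :
    μ.real Z - μ.real (avoidWindow f a d A ∩ Z) ≤
      d * ((μ.real A + ε t) * μ.real (avoidWindow f 0 (s - t) A)) := by
  have hW := measurableSet_avoidWindow hf.measurable hA 0 s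
  have hterm : ∀ i ∈ Finset.range d, μ.real (f^[a + i] ⁻¹' A ∩ Z) ≤
      (μ.real A + ε t) * μ.real (avoidWindow f 0 (s - t) A) := by
    intro i hi
    have hsub :
        f^[a + i] ⁻¹' A ∩ Z ⊆ f^[a + i] ⁻¹' (A ∩ f^[d - i] ⁻¹' avoidWindow f 0 s A) := by
      rintro x ⟨hxA, hxZ⟩
      refine ⟨hxA, ?_⟩
      rw [Set.mem_preimage, ← Function.iterate_add_apply,
        show d - i + (a + i) = a + d by simp only [Finset.mem_range] at hi; omega]
      exact hZ hxZ
    calc μ.real (f^[a + i] ⁻¹' A ∩ Z)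
        ≤ μ.real (f^[a + i] ⁻¹' (A ∩ f^[d - i] ⁻¹' avoidWindow f 0 s A)) :=
          measureReal_mono hsub
      _ = μ.real (A ∩ f^[d - i] ⁻¹' avoidWindow f 0 s A) :=
        (hf.iterate _).measureReal_preimage
          (hA.inter ((hf.measurable.iterate _) hW)).nullMeasurableSet
      _ ≤ _ := h.measureReal_inter_preimage_avoidWindow_le hε hf.measurable hA _ _ _
  calc μ.real Z - μ.real (avoidWindow f a d A ∩ Z)
      ≤ ∑ i ∈ Finset.range d, μ.real (f^[a + i] ⁻¹' A ∩ Z) :=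
        measureReal_sub_avoidWindow_inter_le_sum hf.measurable hA d a Z
    _ ≤ _ := by simpa using Finset.sum_le_sum hterm

lemma abs_measureReal_inter_avoidWindow_inter_preimage_sub_le [IsProbabilityMeasure μ]
    (h : HasCorrelationDecay μ f A ε) (hε : Antitone ε) (hf : Measurable f)
    (hA : MeasurableSet A) {R : ℕ} (hR : ∀ i, 0 < i → i < R → A ∩ f^[i] ⁻¹' A = ∅)
    {S : Set X} (hS : MeasurableSet S) (d t : ℕ) :
    |μ.real (A ∩ avoidWindow f 1 d A ∩ f^[d + 1 + t] ⁻¹' S) - μ.real A * μ.real S| ≤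
      (ε t + ∑ j ∈ Finset.Ico R (d + 1), (μ.real A + ε j) * (μ.real A + ε t)) * μ.real S := by
  set p := μ.real A
  have hE := abs_le.1 (h.abs_measureReal_inter_preimage_sub_le hε hS (by omega : t ≤ d + 1 + t))
  have hsub : A ∩ avoidWindow f 1 d A ∩ f^[d + 1 + t] ⁻¹' S ⊆ A ∩ f^[d + 1 + t] ⁻¹' S :=
    fun x hx => ⟨hx.1.1, hx.2⟩
  have hcover : A ∩ f^[d + 1 + t] ⁻¹' S ⊆ (A ∩ avoidWindow f 1 d A ∩ f^[d + 1 + t] ⁻¹' S) ∪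
      ⋃ j ∈ Finset.Ico R (d + 1), A ∩ f^[j] ⁻¹' (A ∩ f^[d + 1 + t - j] ⁻¹' S) := by
    rintro x ⟨hxA, hxS⟩
    by_cases hx : x ∈ avoidWindow f 1 d A
    · exact Or.inl ⟨⟨hxA, hx⟩, hxS⟩
    obtain ⟨j, hj₁, hjd, hjA⟩ : ∃ j, 1 ≤ j ∧ j < 1 + d ∧ f^[j] x ∈ A := by
      simpa [mem_avoidWindow] using hx
    have hRj : R ≤ j := by
      by_contra hjR
      exact (Set.eq_empty_iff_forall_notMem.1 (hR j hj₁ (by omega))) x ⟨hxA, hjA⟩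
    refine Or.inr (Set.mem_biUnion (Finset.mem_Ico.2 ⟨hRj, by omega⟩) ⟨hxA, hjA, ?_⟩)
    rwa [Set.mem_preimage, ← Function.iterate_add_apply, Nat.sub_add_cancel (by omega)]
  have hpiece : ∀ j ∈ Finset.Ico R (d + 1), μ.real (A ∩ f^[j] ⁻¹' (A ∩ f^[d + 1 + t - j] ⁻¹' S)) ≤
      (p + ε j) * (p + ε t) * μ.real S := by
    intro j hj
    rw [mul_assoc]
    calc μ.real (A ∩ f^[j] ⁻¹' (A ∩ f^[d + 1 + t - j] ⁻¹' S))
        ≤ (p + ε j) * μ.real (A ∩ f^[d + 1 + t - j] ⁻¹' S) :=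
          h.measureReal_inter_preimage_le hε (hA.inter ((hf.iterate _) hS)) le_rfl
      _ ≤ (p + ε j) * ((p + ε t) * μ.real S) :=
          mul_le_mul_of_nonneg_left
            (h.measureReal_inter_preimage_le hε hS (by simp only [Finset.mem_Ico] at hj; omega))
            (add_nonneg measureReal_nonneg (h.nonneg j))
  have hlow := (measureReal_mono (μ := μ) hcover).trans ((measureReal_union_le _ _).trans
    (add_le_add_right (measureReal_biUnion_finset_le _ _) _))
  have hsum := Finset.sum_le_sum hpiece
  have hsum₀ : 0 ≤ ∑ j ∈ Finset.Ico R (d + 1), (p + ε j) * (p + ε t) * μ.real S :=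
    Finset.sum_nonneg fun j _ => mul_nonneg (mul_nonneg (add_nonneg measureReal_nonneg
      (h.nonneg j)) (add_nonneg measureReal_nonneg (h.nonneg t))) measureReal_nonneg
  rw [add_mul, Finset.sum_mul, abs_le]
  constructor <;> linarith [measureReal_mono (μ := μ) hsub]

lemma abs_measureReal_avoidWindow_inter_preimage_sub_le [IsProbabilityMeasure μ]
    (h : HasCorrelationDecay μ f A ε) (hε : Antitone ε) (hf : MeasurePreserving f μ μ)
    (hA : MeasurableSet A) {R : ℕ} (hR : ∀ i, 0 < i → i < R → A ∩ f^[i] ⁻¹' A = ∅)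
    {S : Set X} (hS : MeasurableSet S) (ℓ t : ℕ) :
    |μ.real (avoidWindow f 0 ℓ A ∩ f^[ℓ + t] ⁻¹' S) - (1 - ℓ * μ.real A) * μ.real S| ≤
      blockError (μ.real A) ε R ℓ t * μ.real S := by
  set p := μ.real A
  set g : ℕ → ℝ := fun j => (p + ε j) * (p + ε t)
  set term : ℕ → ℝ := fun i =>
    μ.real (f^[0 + i] ⁻¹' A ∩ avoidWindow f (0 + i + 1) (ℓ - i - 1) A ∩ f^[ℓ + t] ⁻¹' S)
  have hdecomp := measureReal_eq_avoidWindow_inter_add_sum (μ := μ) hf.measurable hA ℓ 0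
    (f^[ℓ + t] ⁻¹' S)
  rw [(hf.iterate _).measureReal_preimage hS.nullMeasurableSet] at hdecomp
  have hterm : ∀ i ∈ Finset.range ℓ,
      |term i - p * μ.real S| ≤ (ε t + ∑ j ∈ Finset.Ico R (ℓ - i), g j) * μ.real S := by
    intro i hi
    have hiℓ : i < ℓ := Finset.mem_range.1 hi
    have hset : f^[0 + i] ⁻¹' A ∩ avoidWindow f (0 + i + 1) (ℓ - i - 1) A ∩ f^[ℓ + t] ⁻¹' S =
        f^[i] ⁻¹' (A ∩ avoidWindow f 1 (ℓ - i - 1) A ∩ f^[ℓ - i - 1 + 1 + t] ⁻¹' S) := by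
      rw [Set.preimage_inter, Set.preimage_inter, preimage_iterate_avoidWindow,
        ← Set.preimage_comp, ← Function.iterate_add, show ℓ - i - 1 + 1 + t + i = ℓ + t by omega,
        zero_add, add_comm 1 i]
    simp only [term]
    rw [hset, (hf.iterate i).measureReal_preimage (((hA.inter (measurableSet_avoidWindow
      hf.measurable hA _ _)).inter ((hf.measurable.iterate _) hS)).nullMeasurableSet)]
    simpa only [show ℓ - i - 1 + 1 = ℓ - i by omega] using
      h.abs_measureReal_inter_avoidWindow_inter_preimage_sub_le hε hf.measurable hA hR hS
        (ℓ - i - 1) t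
  have hshape : μ.real (avoidWindow f 0 ℓ A ∩ f^[ℓ + t] ⁻¹' S) - (1 - ℓ * p) * μ.real S =
      -∑ i ∈ Finset.range ℓ, (term i - p * μ.real S) := by
    rw [Finset.sum_sub_distrib, Finset.sum_const, Finset.card_range, nsmul_eq_mul]
    linarith
  have hg : ∀ j, 0 ≤ g j := fun j => mul_nonneg (add_nonneg measureReal_nonneg (h.nonneg j))
    (add_nonneg measureReal_nonneg (h.nonneg t))
  calc |μ.real (avoidWindow f 0 ℓ A ∩ f^[ℓ + t] ⁻¹' S) - (1 - ℓ * p) * μ.real S|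
      ≤ ∑ i ∈ Finset.range ℓ, (ε t + ∑ j ∈ Finset.Ico R (ℓ - i), g j) * μ.real S := by
        rw [hshape, abs_neg]
        exact (Finset.abs_sum_le_sum_abs _ _).trans (Finset.sum_le_sum hterm)
    _ = (ℓ * ε t + ∑ i ∈ Finset.range ℓ, ∑ j ∈ Finset.Ico R (ℓ - i), g j) * μ.real S := by
        rw [← Finset.sum_mul, Finset.sum_add_distrib, Finset.sum_const, Finset.card_range,
          nsmul_eq_mul]
    _ ≤ (ℓ * ε t + (ℓ - R : ℕ) * ∑ j ∈ Finset.Ico R ℓ, g j) * μ.real S := by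
        gcongr
        exact sum_range_sum_Ico_sub_le hg R ℓ
    _ ≤ blockError p ε R ℓ t * μ.real S := by
        gcongr
        exact add_mul_sum_le_blockError measureReal_nonneg h.nonneg R ℓ t

lemma measureReal_avoidWindow_sub_measureReal_avoidWindow_add_le [IsProbabilityMeasure μ]
    (h : HasCorrelationDecay μ f A ε) (hε : Antitone ε) (hf : MeasurePreserving f μ μ)
    (hA : MeasurableSet A) (s d t : ℕ) :
    μ.real (avoidWindow f 0 s A) - μ.real (avoidWindow f 0 (s + d) A) ≤
      d * ((μ.real A + ε t) * μ.real (avoidWindow f 0 (s - t) A)) := by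
  have hZ : f^[d] ⁻¹' avoidWindow f 0 s A ⊆ f^[0 + d] ⁻¹' avoidWindow f 0 s A := by
    rw [zero_add]
  have := h.measureReal_sub_avoidWindow_inter_le hε hf hA hZ t
  rwa [(hf.iterate d).measureReal_preimage
      (measurableSet_avoidWindow hf.measurable hA 0 s).nullMeasurableSet,
    ← avoidWindow_zero_add_length, add_comm d] at this

lemma abs_measureReal_avoidWindow_add_sub_mul_le [IsProbabilityMeasure μ]
    (h : HasCorrelationDecay μ f A ε) (hε : Antitone ε) (hf : MeasurePreserving f μ μ)
    (hA : MeasurableSet A) {R : ℕ} (hR : ∀ i, 0 < i → i < R → A ∩ f^[i] ⁻¹' A = ∅)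
    (s ℓ t : ℕ) :
    |μ.real (avoidWindow f 0 (s + (ℓ + t)) A) -
        (1 - ℓ * μ.real A) * μ.real (avoidWindow f 0 s A)| ≤
      blockError (μ.real A) ε R ℓ t * μ.real (avoidWindow f 0 s A) +
        t * (μ.real A + ε t) * μ.real (avoidWindow f 0 (s - t) A) := by
  have hblock := abs_le.1 (h.abs_measureReal_avoidWindow_inter_preimage_sub_le hε hf hA hR
    (measurableSet_avoidWindow hf.measurable hA 0 s) ℓ t)
  have hW : avoidWindow f 0 (s + (ℓ + t)) A =
      avoidWindow f ℓ t A ∩ (avoidWindow f 0 ℓ A ∩ f^[ℓ + t] ⁻¹' avoidWindow f 0 s A) := by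
    rw [add_comm s, avoidWindow_zero_add_length, avoidWindow_add_length, zero_add,
      Set.inter_assoc, Set.inter_left_comm]
  have hgap := h.measureReal_sub_avoidWindow_inter_le hε hf hA (a := ℓ) (d := t)
    (Set.inter_subset_right (s := avoidWindow f 0 ℓ A) (t := f^[ℓ + t] ⁻¹' avoidWindow f 0 s A)) t
  rw [← hW] at hgap
  have hsub := measureReal_mono (μ := μ)
    (avoidWindow_add_subset_inter_preimage (T := f) (A := A) s ℓ t)
  have : 0 ≤ t * (μ.real A + ε t) * μ.real (avoidWindow f 0 (s - t) A) :=
    mul_nonneg (mul_nonneg (Nat.cast_nonneg t) (add_nonneg measureReal_nonneg (h.nonneg t)))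
      measureReal_nonneg
  rw [abs_le]
  constructor <;> linarith

lemma measureReal_avoidWindow_add_le [IsProbabilityMeasure μ]
    (h : HasCorrelationDecay μ f A ε) (hε : Antitone ε) (hf : MeasurePreserving f μ μ)
    (hA : MeasurableSet A) {R : ℕ} (hR : ∀ i, 0 < i → i < R → A ∩ f^[i] ⁻¹' A = ∅)
    (s ℓ t : ℕ) :
    μ.real (avoidWindow f 0 (s + (ℓ + t)) A) ≤
      (1 - ℓ * μ.real A + blockError (μ.real A) ε R ℓ t) * μ.real (avoidWindow f 0 s A) := by
  have hblock := abs_le.1 (h.abs_measureReal_avoidWindow_inter_preimage_sub_le hε hf hA hR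
    (measurableSet_avoidWindow hf.measurable hA 0 s) ℓ t)
  have hsub := measureReal_mono (μ := μ)
    (avoidWindow_add_subset_inter_preimage (T := f) (A := A) s ℓ t)
  linarith

theorem abs_measureReal_avoidWindow_sub_pow_le [IsProbabilityMeasure μ]
    (h : HasCorrelationDecay μ f A ε) (hε : Antitone ε) (hf : MeasurePreserving f μ μ)
    (hA : MeasurableSet A) {R : ℕ} (hR : ∀ i, 0 < i → i < R → A ∩ f^[i] ⁻¹' A = ∅)
    {k b ℓ t : ℕ} (hbk : b ≤ k) (ht : 0 < t) {L Υ : ℝ} (hL : L = 1 - ℓ * μ.real A)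
    (hL₀ : 0 ≤ L) (hΥ : Υ = t * (μ.real A + ε t) + blockError (μ.real A) ε R ℓ t) :
    |μ.real (avoidWindow f 0 (k * (ℓ + t) + b) A) - L ^ k| ≤
      k * Υ * (L + Υ) ^ (k - 1) * (1 + L + Υ) := by
  have hstep := fun s => h.abs_measureReal_avoidWindow_add_sub_mul_le hε hf hA hR s ℓ t
  have hgrow := fun s => h.measureReal_avoidWindow_add_le hε hf hA hR s ℓ t
  have hℓ := (abs_le.1 (h.abs_measureReal_avoidWindow_inter_preimage_sub_le hε hf hA hR
    MeasurableSet.univ ℓ t)).2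
  have hrem := h.measureReal_avoidWindow_sub_measureReal_avoidWindow_add_le hε hf hA
    (k * (ℓ + t)) b t
  simp only [Set.preimage_univ, Set.inter_univ, probReal_univ, mul_one] at hℓ
  simp only [← hL] at hstep hgrow hℓ
  set Ξ := blockError (μ.real A) ε R ℓ t
  set δ := t * (μ.real A + ε t)
  set u : ℕ → ℝ := fun s => μ.real (avoidWindow f 0 s A)
  subst hΥ
  have hpt : 0 ≤ μ.real A + ε t := add_nonneg measureReal_nonneg (h.nonneg t)
  have hΞ : 0 ≤ Ξ := blockError_nonneg measureReal_nonneg h.nonneg R ℓ t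
  have hδ : 0 ≤ δ := mul_nonneg (Nat.cast_nonneg t) hpt
  have hu : Antitone u := fun a b hab =>
    measureReal_mono (avoidWindow_subset_avoidWindow le_rfl (by omega))
  have hu0 : u 0 = 1 := by simp [u]
  have hpow : ∀ j, u (j * (ℓ + t) - t) ≤ (L + (δ + Ξ)) ^ j := fun j =>
    (le_pow_of_le_mul (by linarith) hu0.le (by linarith) hgrow j).trans
      (pow_le_pow_left₀ (by linarith) (by linarith) j)
  have herr := abs_le.1 (abs_sub_pow_le_of_abs_sub_mul_le hu hu0 hL₀ hΞ hδ hstep hpow k)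
  have hremainder : u (k * (ℓ + t)) - u (k * (ℓ + t) + b) ≤
      k * (δ + Ξ) * (L + (δ + Ξ)) ^ (k - 1) * (L + (δ + Ξ)) := by
    calc u (k * (ℓ + t)) - u (k * (ℓ + t) + b)
        ≤ b * ((μ.real A + ε t) * u (k * (ℓ + t) - t)) := hrem
      _ ≤ k * ((δ + Ξ) * (L + (δ + Ξ)) ^ k) := by
        have hpδ : μ.real A + ε t ≤ δ := le_mul_of_one_le_left hpt (by exact_mod_cast ht)
        exact mul_le_mul (by exact_mod_cast hbk) (mul_le_mul (by linarith) (hpow k)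
          measureReal_nonneg (by positivity)) (by positivity) (Nat.cast_nonneg k)
      _ = k * (δ + Ξ) * (L + (δ + Ξ)) ^ (k - 1) * (L + (δ + Ξ)) := by
        rcases k with _ | k
        · simp
        · rw [Nat.add_sub_cancel, pow_succ]
          ring
  have hmono := hu (Nat.le_add_right (k * (ℓ + t)) b)
  rw [abs_le]
  constructor <;> linarith

end HasCorrelationDecay

theorem n_estimate_general {X : Type*} [MeasurableSpace X] (μ : Measure X)
    [IsProbabilityMeasure μ] (f : X → X) (hf : MeasurePreserving f μ μ)
    (𝒞 : Set (X → ℝ)) (N : (X → ℝ) → ℝ) (γ : ℕ → ℝ)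
    (hγmono : Antitone γ) (hγ0 : Filter.Tendsto γ Filter.atTop (nhds 0))
    (hdecay : ∀ φ ∈ 𝒞, ∀ ψ : X → ℝ, Integrable ψ μ → ∀ n : ℕ,
      |(∫ x, φ x * ψ (f^[n] x) ∂μ) - (∫ x, φ x ∂μ) * ∫ x, ψ x ∂μ| ≤
        N φ * (∫ x, |ψ x| ∂μ) * γ n)
    (A : Set X) (hA : MeasurableSet A)
    (hind : A.indicator (fun _ => (1 : ℝ)) ∈ 𝒞)
    -- `R` is the first return time of the set `A`.
    (R : ℕ) (hR : ∀ i, 0 < i → i < R → A ∩ f^[i] ⁻¹' A = ∅)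
    (n k b ℓ t : ℕ) (ht : 0 < t)
    (hn : n = k * (n / k) + b) (htℓ : t < n / k) (hℓ : ℓ = n / k - t)
    (hPA : ((n / k : ℕ) : ℝ) * (μ A).toReal < 1)
    (L Ξ Υ : ℝ) (hL : L = 1 - (ℓ : ℝ) * (μ A).toReal)
    (hΞ : Ξ = N (A.indicator fun _ => (1 : ℝ)) * (ℓ : ℝ) * γ t +
        N (A.indicator fun _ => (1 : ℝ)) * ((ℓ - R : ℕ) : ℝ) *
          ((μ A).toReal + N (A.indicator fun _ => (1 : ℝ)) * γ t) *
          ∑ q ∈ Finset.Ico R ℓ, γ q +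
        (ℓ : ℝ) * ((ℓ - R : ℕ) : ℝ) *
          ((μ A).toReal ^ 2 + (μ A).toReal * N (A.indicator fun _ => (1 : ℝ)) * γ t))
    (hΥ : Υ = (t : ℝ) * ((μ A).toReal + N (A.indicator fun _ => (1 : ℝ)) * γ t) + Ξ) :
    |(μ (avoidWindow f 0 n A)).toReal - L ^ k| ≤
      (k : ℝ) * Υ * (L + Υ) ^ (k - 1) * (1 + L + Υ) := by
  have h := hasCorrelationDecay_of_integral hf.measurable hA (hdecay _ hind)
  have hε := hγmono.const_mul_of_mul_nonneg (hγmono.le_of_tendsto hγ0) h.nonneg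
  have hk : 0 < k := Nat.pos_of_ne_zero fun hk => by simp [hk] at htℓ
  have hbk : b < k := by
    have := Nat.div_add_mod n k
    have := Nat.mod_lt n hk
    omega
  have hL₀ : 0 ≤ L := by
    have : (ℓ : ℝ) * (μ A).toReal ≤ (n / k : ℕ) * (μ A).toReal :=
      mul_le_mul_of_nonneg_right (by exact_mod_cast (show ℓ ≤ n / k by omega))
        ENNReal.toReal_nonneg
    linarith
  have hΞ' : Ξ = blockError (μ.real A) (fun g => N (A.indicator fun _ => 1) * γ g) R ℓ t := by
    rw [hΞ, blockError, ← Finset.mul_sum, measureReal_def]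
    ring
  rw [show n = k * (ℓ + t) + b by rwa [hℓ, Nat.sub_add_cancel htℓ.le]]
  exact h.abs_measureReal_avoidWindow_sub_pow_le hε hf hA hR hbk.le ht hL hL₀ (hΞ' ▸ hΥ)

theorem n_estimate {X : Type*} [MeasurableSpace X] (μ : Measure X)
    [IsProbabilityMeasure μ] (f : X → X) (hf : MeasurePreserving f μ μ)
    (𝒞 : Set (X → ℝ)) (N : (X → ℝ) → ℝ) (γ : ℕ → ℝ)
    (hγmono : Antitone γ) (hγ0 : Filter.Tendsto γ Filter.atTop (nhds 0))
    (hdecay : ∀ φ ∈ 𝒞, ∀ ψ : X → ℝ, Integrable ψ μ → ∀ n : ℕ,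
      |(∫ x, φ x * ψ (f^[n] x) ∂μ) - (∫ x, φ x ∂μ) * ∫ x, ψ x ∂μ| ≤
        N φ * (∫ x, |ψ x| ∂μ) * γ n)
    (A : Set X) (hA : MeasurableSet A)
    (hind : A.indicator (fun _ => (1 : ℝ)) ∈ 𝒞)
    -- `R` is the first return time of the set `A`.
    (R : ℕ) (hR : ∀ i, 0 < i → i < R → A ∩ f^[i] ⁻¹' A = ∅)
    (n k b ℓ t : ℕ) (hk : 0 < k) (ht : 0 < t)
    (hn : n = k * (n / k) + b) (htℓ : t < n / k) (hℓ : ℓ = n / k - t)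
    (hPA : ((n / k : ℕ) : ℝ) * (μ A).toReal < 1)
    (L Ξ Υ : ℝ) (hL : L = 1 - (ℓ : ℝ) * (μ A).toReal)
    (hΞ : Ξ = N (A.indicator fun _ => (1 : ℝ)) * (ℓ : ℝ) * γ t +
        N (A.indicator fun _ => (1 : ℝ)) * ((ℓ - R : ℕ) : ℝ) *
          ((μ A).toReal + N (A.indicator fun _ => (1 : ℝ)) * γ t) *
          ∑ q ∈ Finset.Ico R ℓ, γ q +
        (ℓ : ℝ) * ((ℓ - R : ℕ) : ℝ) *
          ((μ A).toReal ^ 2 + (μ A).toReal * N (A.indicator fun _ => (1 : ℝ)) * γ t))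
    (hΥ : Υ = (t : ℝ) * ((μ A).toReal + N (A.indicator fun _ => (1 : ℝ)) * γ t) + Ξ) :
    |(μ (avoidWindow f 0 n A)).toReal - L ^ k| ≤
      (k : ℝ) * Υ * (L + Υ) ^ (k - 1) * (1 + L + Υ) :=
  n_estimate_general μ f hf 𝒞 N γ hγmono hγ0 hdecay A hA hind R hR n k b ℓ t ht hn htℓ hℓ hPA L Ξ Υ
    hL hΞ hΥ
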